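/- arXiv:math/0002116 — 3 statements merged into one kernel-verified Lean document; each statement's English description precedes it below -/
import Mathlib

section
/- Let A• be a Gerstenhaber algebra over a commutative ring k. Define A•[ε] with ε of degree 1, ε² = 0, and k[ε]-bilinear operations given on homogeneous a, b ∈ A• by a ⋆ b = ab + ε(−1)^{|a|}[a,b] and {a,b} = [a,b]. Then the product ⋆ is graded commutative and associative on A•[ε]. -/
noncomputable section

/-- The Koszul sign `(-1)^n` for `n : ℤ`, valued in the ground ring `k`. -/
def gsign (k : Type*) [CommRing k] (n : ℤ) : k := if Even n then 1 else -1

/-- For a Gerstenhaber algebra `A` over `k` (graded by `𝒜 : ℤ → Submodule k A`,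
with graded commutative associative product `mul` of degree 0 and a degree `-1` bracket `br`
making `A[1]` a graded Lie algebra and satisfying the Leibniz identity), the canonical
deformation `A[ε]` (modelled as `A × A`, the pair `(a, b)` representing `a + εb`, with
`a ⋆ b = ab + ε (-1)^{|a|} [a,b]` extended `k[ε]`-bilinearly) has a graded commutative and
associative product `⋆` on homogeneous elements. -/
theorem stmt0 {k A : Type*} [CommRing k] [AddCommGroup A] [Module k A]
    (𝒜 : ℤ → Submodule k A)
    (mul br : A →ₗ[k] A →ₗ[k] A)
    (hmul_deg : ∀ i j a b, a ∈ 𝒜 i → b ∈ 𝒜 j → mul a b ∈ 𝒜 (i + j))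
    (hbr_deg : ∀ i j a b, a ∈ 𝒜 i → b ∈ 𝒜 j → br a b ∈ 𝒜 (i + j - 1))
    (hcomm : ∀ i j a b, a ∈ 𝒜 i → b ∈ 𝒜 j → mul a b = gsign k (i * j) • mul b a)
    (hassoc : ∀ a b c : A, mul (mul a b) c = mul a (mul b c))
    (hanti : ∀ i j a b, a ∈ 𝒜 i → b ∈ 𝒜 j →
      br a b = - gsign k ((i - 1) * (j - 1)) • br b a)
    (hjac : ∀ i j (a b c : A), a ∈ 𝒜 i → b ∈ 𝒜 j →
      br a (br b c) = br (br a b) c + gsign k ((i - 1) * (j - 1)) • br b (br a c))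
    (hleib : ∀ i j (a b c : A), a ∈ 𝒜 i → b ∈ 𝒜 j →
      br a (mul b c) = mul (br a b) c + gsign k ((i - 1) * j) • mul b (br a c)) :
    -- the product ⋆ on A[ε] ≅ A × A ((a,b) ↔ a + εb); `i` is the degree of the
    -- (homogeneous) first argument:
    -- (a+εb) ⋆ (c+εd) = ac + ε((-1)^{|a|}[a,c] + bc + (-1)^{|a|} a d)
    let star : ℤ → A × A → A × A → A × A := fun i x y =>
      (mul x.1 y.1,
        gsign k i • br x.1 y.1 + mul x.2 y.1 + gsign k i • mul x.1 y.2)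
    -- graded commutativity of ⋆ :
    (∀ i j (x y : A × A), x.1 ∈ 𝒜 i → x.2 ∈ 𝒜 (i - 1) → y.1 ∈ 𝒜 j → y.2 ∈ 𝒜 (j - 1) →
      star i x y = gsign k (i * j) • star j y x) ∧
    -- associativity of ⋆ :
    (∀ i j l (x y z : A × A), x.1 ∈ 𝒜 i → x.2 ∈ 𝒜 (i - 1) → y.1 ∈ 𝒜 j → y.2 ∈ 𝒜 (j - 1) →
      z.1 ∈ 𝒜 l → z.2 ∈ 𝒜 (l - 1) →
      star (i + j) (star i x y) z = star i x (star j y z)) := by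
  intro star
  constructor
  · -- graded commutativity
    intro i j x y hx1 hx2 hy1 hy2
    simp only [star, Prod.smul_mk, Prod.mk.injEq]
    refine ⟨hcomm i j x.1 y.1 hx1 hy1, ?_⟩
    rw [hanti i j x.1 y.1 hx1 hy1, hcomm (i-1) j x.2 y.1 hx2 hy1,
      hcomm i (j-1) x.1 y.2 hx1 hy2]
    by_cases hi : Even i <;> by_cases hj : Even j <;>
    · simp only [gsign, Int.even_mul, Int.even_sub, Int.even_add, Int.not_even_one, hi, hj,
        iff_true, iff_false, not_true, not_false_iff, if_true, if_false]
      norm_num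
      module
  · -- associativity
    intro i j l x y z hx1 hx2 hy1 hy2 hz1 hz2
    simp only [star, Prod.mk.injEq]
    refine ⟨hassoc _ _ _, ?_⟩
    simp only [map_add, map_smul, LinearMap.add_apply, LinearMap.smul_apply]
    rw [hanti (i+j) l (mul x.1 y.1) z.1 (hmul_deg i j _ _ hx1 hy1) hz1,
      hleib l i z.1 x.1 y.1 hz1 hx1,
      hanti l i z.1 x.1 hz1 hx1,
      hanti l j z.1 y.1 hz1 hy1,
      hleib i j x.1 y.1 z.1 hx1 hy1,
      hcomm j (i+l-1) y.1 (br x.1 z.1) hy1 (hbr_deg i l x.1 z.1 hx1 hz1)]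
    simp only [hassoc, map_add, map_smul, map_neg, LinearMap.add_apply,
      LinearMap.smul_apply, LinearMap.neg_apply, smul_add, smul_neg, neg_smul, smul_smul]
    by_cases hi : Even i <;> by_cases hj : Even j <;> by_cases hl : Even l <;>
    · simp only [gsign, Int.even_mul, Int.even_sub, Int.even_add, Int.not_even_one, hi, hj, hl,
        iff_true, iff_false, not_true, not_false_iff, if_true, if_false]
      norm_num
      module
end
end

section
/- Let A• be a Gerstenhaber algebra. The canonical deformation A•[ε] with product a ⋆ b = ab + ε(−1)^{|a|}[a,b] (extended k[ε]-bilinearly) and bracket {a,b} = [a,b] (extended k[ε]-bilinearly) satisfies the Leibniz identity {x, y ⋆ z} = {x,y} ⋆ z + (−1)^{(|x|−1)|y|} y ⋆ {x,z} for homogeneous x, y, z ∈ A•[ε]; hence A•[ε] is again a Gerstenhaber algebra. -/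
noncomputable section

lemma gsign_add (k : Type*) [CommRing k] (m n : ℤ) :
    gsign k (m + n) = gsign k m * gsign k n := by
  unfold gsign
  by_cases hm : Even m <;> by_cases hn : Even n <;>
    simp [hm, hn, Int.even_add, *]

lemma gsign_two_mul (k : Type*) [CommRing k] (c : ℤ) : gsign k (2 * c) = 1 := by
  unfold gsign; rw [if_pos ⟨c, two_mul c⟩]

lemma gsign_eq (k : Type*) [CommRing k] {m n : ℤ} (c : ℤ) (h : m = n + 2 * c) :
    gsign k m = gsign k n := by
  subst h; rw [gsign_add, gsign_two_mul, mul_one]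

/-- For a Gerstenhaber algebra `A`, the canonical deformation `A[ε]`
(modelled as `A × A`, `(a,b) ↔ a + εb`) with product
`a ⋆ b = ab + ε(-1)^{|a|}[a,b]` and bracket `{a,b} = [a,b]`, both extended
`k[ε]`-bilinearly, satisfies the Leibniz identity
`{x, y ⋆ z} = {x,y} ⋆ z + (-1)^{(|x|-1)|y|} y ⋆ {x,z}` on homogeneous elements;
hence `A[ε]` is again a Gerstenhaber algebra. -/
theorem stmt1 {k A : Type*} [CommRing k] [AddCommGroup A] [Module k A]
    (𝒜 : ℤ → Submodule k A)
    (mul br : A →ₗ[k] A →ₗ[k] A)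
    (hmul_deg : ∀ i j a b, a ∈ 𝒜 i → b ∈ 𝒜 j → mul a b ∈ 𝒜 (i + j))
    (hbr_deg : ∀ i j a b, a ∈ 𝒜 i → b ∈ 𝒜 j → br a b ∈ 𝒜 (i + j - 1))
    (hcomm : ∀ i j a b, a ∈ 𝒜 i → b ∈ 𝒜 j → mul a b = gsign k (i * j) • mul b a)
    (hassoc : ∀ a b c : A, mul (mul a b) c = mul a (mul b c))
    (hanti : ∀ i j a b, a ∈ 𝒜 i → b ∈ 𝒜 j →
      br a b = - gsign k ((i - 1) * (j - 1)) • br b a)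
    (hjac : ∀ i j (a b c : A), a ∈ 𝒜 i → b ∈ 𝒜 j →
      br a (br b c) = br (br a b) c + gsign k ((i - 1) * (j - 1)) • br b (br a c))
    (hleib : ∀ i j (a b c : A), a ∈ 𝒜 i → b ∈ 𝒜 j →
      br a (mul b c) = mul (br a b) c + gsign k ((i - 1) * j) • mul b (br a c)) :
    -- the product ⋆ and bracket {,} on A[ε] ≅ A × A; `i` is the degree of the
    -- (homogeneous) first argument
    let star : ℤ → A × A → A × A → A × A := fun i x y =>
      (mul x.1 y.1,
        gsign k i • br x.1 y.1 + mul x.2 y.1 + gsign k i • mul x.1 y.2)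
    let brE : ℤ → A × A → A × A → A × A := fun i x y =>
      (br x.1 y.1, br x.2 y.1 + gsign k (i - 1) • br x.1 y.2)
    -- Leibniz identity on A[ε] for homogeneous x (deg i), y (deg j), z (deg l):
    ∀ i j l (x y z : A × A), x.1 ∈ 𝒜 i → x.2 ∈ 𝒜 (i - 1) → y.1 ∈ 𝒜 j → y.2 ∈ 𝒜 (j - 1) →
      z.1 ∈ 𝒜 l → z.2 ∈ 𝒜 (l - 1) →
      brE i x (star j y z) =
        star (i + j - 1) (brE i x y) z + gsign k ((i - 1) * j) • star j y (brE i x z) := by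
  intro star brE i j l x y z hx1 hx2 hy1 hy2 hz1 hz2
  have hA : gsign k (i + j - 1) = gsign k (i - 1) * gsign k j := by
    rw [show i + j - 1 = (i - 1) + j by ring, gsign_add]
  have hB : gsign k ((i - 1) * j) = gsign k (i - 1) * gsign k ((i - 1) * (j - 1)) := by
    rw [← gsign_add, show (i - 1) + (i - 1) * (j - 1) = (i - 1) * j by ring]
  have hC : gsign k ((i - 1 - 1) * j) = gsign k ((i - 1) * j) * gsign k j := by
    rw [← gsign_add]; exact gsign_eq k (-j) (by ring)
  simp only [star, brE]
  rw [Prod.ext_iff]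
  constructor
  · simp only [Prod.fst_add, Prod.smul_fst]
    exact hleib i j x.1 y.1 z.1 hx1 hy1
  · simp only [Prod.snd_add, Prod.smul_snd, map_add, map_smul, LinearMap.add_apply,
        LinearMap.smul_apply]
    rw [hleib (i - 1) j x.2 y.1 z.1 hx2 hy1,
        hjac i j x.1 y.1 z.1 hx1 hy1,
        hleib i (j - 1) x.1 y.2 z.1 hx1 hy2,
        hleib i j x.1 y.1 z.2 hx1 hy1]
    rw [hC]
    simp only [hA, hB]
    module
end
end

section
/- Let g be a Lie bialgebra with bracket [,] : Λ²g → g and cobracket δ : g → Λ²g (satisfying the cocycle compatibility). Then the composite D = [,] ∘ δ : g → g is simultaneously a derivation of the Lie bracket (D[x,y] = [Dx,y] + [x,Dy]) and a coderivation of the cobracket (δ(Dx) = (D⊗1 + 1⊗D)(δx)). -/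
noncomputable section

open scoped TensorProduct

variable {k g : Type*} [CommRing k] [LieRing g] [LieAlgebra k g]

/-- The bracket `g ⊗ g → g` as a linear map. -/
def brT : g ⊗[k] g →ₗ[k] g :=
  TensorProduct.lift (LinearMap.mk₂ k (fun x y => ⁅x, y⁆)
    (fun _ _ _ => add_lie _ _ _) (fun _ _ _ => smul_lie _ _ _)
    (fun _ _ _ => lie_add _ _ _) (fun _ _ _ => lie_smul _ _ _))

/-- The flip `x ⊗ y ↦ y ⊗ x`. -/
def tauT : g ⊗[k] g →ₗ[k] g ⊗[k] g := (TensorProduct.comm k g g).toLinearMap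

/-- The cyclic rotation `x ⊗ (y ⊗ z) ↦ y ⊗ (z ⊗ x)` on `g ⊗ (g ⊗ g)`. -/
def rotT : g ⊗[k] (g ⊗[k] g) →ₗ[k] g ⊗[k] (g ⊗[k] g) :=
  (TensorProduct.assoc k g g g).toLinearMap ∘ₗ
    (TensorProduct.comm k g (g ⊗[k] g)).toLinearMap

-- ========== auxiliary definitions ==========

/-- The adjoint action `x ⊗ t ↦ ⁅x, t⁆` as a linear map `g ⊗ (g ⊗ g) → g ⊗ g`. -/
def adTT : g ⊗[k] (g ⊗[k] g) →ₗ[k] g ⊗[k] g :=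
  TensorProduct.lift (LinearMap.mk₂ k (fun x t => ⁅x, t⁆)
    (fun _ _ _ => add_lie _ _ _) (fun _ _ _ => smul_lie _ _ _)
    (fun _ _ _ => lie_add _ _ _) (fun _ _ _ => lie_smul _ _ _))

/-- Bracket of first two factors: `a ⊗ (b ⊗ c) ↦ ⁅a,b⁆ ⊗ c`. -/
def psiT : g ⊗[k] (g ⊗[k] g) →ₗ[k] g ⊗[k] g :=
  (TensorProduct.map (brT (k := k) (g := g)) LinearMap.id) ∘ₗ
    (TensorProduct.assoc k g g g).symm.toLinearMap

/-- Bracket of last two factors: `a ⊗ (b ⊗ c) ↦ a ⊗ ⁅b,c⁆`. -/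
def qT : g ⊗[k] (g ⊗[k] g) →ₗ[k] g ⊗[k] g :=
  TensorProduct.map LinearMap.id (brT (k := k) (g := g))

/-- Swap of the first two factors: `a ⊗ (b ⊗ c) ↦ b ⊗ (a ⊗ c)`. -/
def swapT : g ⊗[k] (g ⊗[k] g) →ₗ[k] g ⊗[k] (g ⊗[k] g) :=
  (TensorProduct.assoc k g g g).toLinearMap ∘ₗ
    (TensorProduct.map (tauT (k := k) (g := g)) LinearMap.id) ∘ₗ
      (TensorProduct.assoc k g g g).symm.toLinearMap

-- ========== basic computation lemmas ==========

@[simp] lemma brT_tmul (a b : g) : brT (k := k) (a ⊗ₜ[k] b) = ⁅a, b⁆ := rfl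

@[simp] lemma adTT_tmul (a : g) (t : g ⊗[k] g) : adTT (a ⊗ₜ[k] t) = ⁅a, t⁆ := rfl

@[simp] lemma tauT_tmul (a b : g) : tauT (k := k) (a ⊗ₜ[k] b) = b ⊗ₜ[k] a := rfl

@[simp] lemma rotT_tmul (a b c : g) :
    rotT (k := k) (a ⊗ₜ[k] (b ⊗ₜ[k] c)) = b ⊗ₜ[k] (c ⊗ₜ[k] a) := rfl

@[simp] lemma psiT_tmul (a b c : g) :
    psiT (k := k) (a ⊗ₜ[k] (b ⊗ₜ[k] c)) = ⁅a, b⁆ ⊗ₜ[k] c := rfl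

@[simp] lemma qT_tmul (a b c : g) :
    qT (k := k) (a ⊗ₜ[k] (b ⊗ₜ[k] c)) = a ⊗ₜ[k] ⁅b, c⁆ := rfl

@[simp] lemma swapT_tmul (a b c : g) :
    swapT (k := k) (a ⊗ₜ[k] (b ⊗ₜ[k] c)) = b ⊗ₜ[k] (a ⊗ₜ[k] c) := rfl

/-- `brT` intertwines the adjoint actions (Jacobi identity). -/
lemma brT_lie (x : g) (t : g ⊗[k] g) : brT ⁅x, t⁆ = ⁅x, brT t⁆ := by
  induction t using TensorProduct.induction_on with
  | zero => simp
  | tmul a b =>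
    rw [TensorProduct.LieModule.lie_tmul_right, map_add, brT_tmul, brT_tmul, brT_tmul,
      ← leibniz_lie]
  | add u v hu hv => simp [lie_add, map_add, hu, hv]

/-- `rotT ∘ rotT` sends `u ⊗ b` (assoc'd) to `b ⊗ u`. -/
lemma rot2_assoc (u : g ⊗[k] g) (b : g) :
    rotT (rotT ((TensorProduct.assoc k g g g) (u ⊗ₜ[k] b))) = b ⊗ₜ[k] u := by
  induction u using TensorProduct.induction_on with
  | zero => simp
  | tmul p q => simp
  | add s t hs ht =>
    simp only [TensorProduct.add_tmul, map_add, hs, ht, ← TensorProduct.tmul_add]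

/-- Left-hand side of the key identity. -/
def keyL : g ⊗[k] (g ⊗[k] g) →ₗ[k] g ⊗[k] g :=
  psiT - qT ∘ₗ (rotT ∘ₗ rotT) + adTT ∘ₗ (rotT ∘ₗ rotT) + adTT ∘ₗ (rotT ∘ₗ rotT)

/-- Right-hand side of the key identity. -/
def keyR : g ⊗[k] (g ⊗[k] g) →ₗ[k] g ⊗[k] g :=
  psiT ∘ₗ (LinearMap.id + rotT + rotT ∘ₗ rotT)
    - (psiT ∘ₗ rotT) ∘ₗ (LinearMap.id + swapT)
    - qT ∘ₗ (LinearMap.id + rotT + rotT ∘ₗ rotT)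
    - qT ∘ₗ (LinearMap.id + swapT)

/-- The key linear-map identity on `g ⊗ (g ⊗ g)`. -/
lemma key_map : keyL (k := k) (g := g) = keyR := by
  apply TensorProduct.ext'
  intro a u
  induction u using TensorProduct.induction_on with
  | zero => simp
  | tmul b c =>
    simp only [keyL, keyR, LinearMap.add_apply, LinearMap.sub_apply,
      LinearMap.comp_apply, LinearMap.id_apply, rotT_tmul, swapT_tmul,
      psiT_tmul, qT_tmul, adTT_tmul, map_add,
      TensorProduct.LieModule.lie_tmul_right]
    rw [← lie_skew b c, ← lie_skew c a]
    simp only [TensorProduct.neg_tmul, TensorProduct.tmul_neg]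
    abel
  | add u v hu hv =>
    rw [TensorProduct.tmul_add, map_add, map_add, hu, hv]

/-- let `g` be a Lie bialgebra: a Lie algebra with a cobracket
`δ : g → g ⊗ g` which is antisymmetric, co-Jacobi, and a 1-cocycle
(`δ⁅x,y⁆ = x·δ(y) − y·δ(x)` for the adjoint action on `g ⊗ g`).  Then the composite
`D = [,] ∘ δ : g → g` is simultaneously a derivation of the bracket and a coderivation of
the cobracket. -/
theorem stmt19 (δ : g →ₗ[k] g ⊗[k] g)
    -- antisymmetry of the cobracket:
    (hanti : ∀ x, tauT (k := k) (g := g) (δ x) = - δ x)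
    -- co-Jacobi identity:
    (hcojac : ∀ x,
      (LinearMap.id + rotT + rotT ∘ₗ rotT :
          g ⊗[k] (g ⊗[k] g) →ₗ[k] g ⊗[k] (g ⊗[k] g))
        ((TensorProduct.assoc k g g g)
          ((TensorProduct.map δ (LinearMap.id : g →ₗ[k] g)) (δ x))) = 0)
    -- the 1-cocycle (compatibility) condition, via the adjoint action on g ⊗ g:
    (hcocycle : ∀ x y : g, δ ⁅x, y⁆ = ⁅x, δ y⁆ - ⁅y, δ x⁆) :
    -- D = bracket ∘ cobracket
    let D : g →ₗ[k] g := (brT (k := k) (g := g)) ∘ₗ δ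
    -- D is a derivation of the bracket:
    (∀ x y : g, D ⁅x, y⁆ = ⁅D x, y⁆ + ⁅x, D y⁆) ∧
    -- D is a coderivation of the cobracket:
    (∀ x : g, δ (D x)
      = (TensorProduct.map D LinearMap.id) (δ x)
        + (TensorProduct.map LinearMap.id D) (δ x)) := by
  intro D
  constructor
  · -- derivation
    intro x y
    have h0 : D ⁅x, y⁆ = brT (⁅x, δ y⁆ - ⁅y, δ x⁆) := by
      simp [D, LinearMap.comp_apply, hcocycle]
    have hDx : D x = brT (δ x) := rfl
    have hDy : D y = brT (δ y) := rfl
    rw [h0, map_sub, brT_lie, brT_lie, hDx, hDy, ← lie_skew y (brT (δ x))]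
    abel
  · -- coderivation
    intro x
    set c : g ⊗[k] (g ⊗[k] g) :=
      (TensorProduct.assoc k g g g)
        ((TensorProduct.map δ (LinearMap.id : g →ₗ[k] g)) (δ x)) with hc
    -- co-Jacobi: c + rot c + rot² c = 0
    have hS : c + rotT c + rotT (rotT c) = 0 := by
      have := hcojac x
      simpa [LinearMap.add_apply, LinearMap.comp_apply] using this
    -- antisymmetry of the inner δ: swap c = -c
    have hT : swapT c = -c := by
      have h1 : ∀ t : g ⊗[k] g,
          (TensorProduct.map (tauT (k := k) (g := g)) LinearMap.id)
              ((TensorProduct.map δ LinearMap.id) t)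
            = - (TensorProduct.map δ LinearMap.id) t := by
        intro t
        induction t using TensorProduct.induction_on with
        | zero => simp
        | tmul a b => simp [TensorProduct.map_tmul, hanti a, TensorProduct.neg_tmul]
        | add u v hu hv => rw [map_add, map_add, hu, hv, neg_add]
      have h2 : swapT c =
          (TensorProduct.assoc k g g g)
            ((TensorProduct.map (tauT (k := k) (g := g)) LinearMap.id)
              ((TensorProduct.map δ LinearMap.id) (δ x))) := by
        simp [swapT, hc, LinearMap.comp_apply]
      rw [h2, h1, map_neg, hc]
    -- (1 ⊗ δ)(δ x) = - rot² c
    have hm : (TensorProduct.map (LinearMap.id : g →ₗ[k] g) δ) (δ x)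
        = - rotT (rotT c) := by
      have h2 : ∀ t : g ⊗[k] g,
          rotT (rotT ((TensorProduct.assoc k g g g)
              ((TensorProduct.map δ LinearMap.id) t)))
            = (TensorProduct.map (LinearMap.id : g →ₗ[k] g) δ) (tauT t) := by
        intro t
        induction t using TensorProduct.induction_on with
        | zero => simp
        | tmul a b => simp [TensorProduct.map_tmul, rot2_assoc]
        | add u v hu hv => simp [map_add, hu, hv]
      have h3 := h2 (δ x)
      rw [hanti x, map_neg] at h3
      rw [hc, h3, neg_neg]
    -- δ (brT t) in terms of adTT
    have hδbr : ∀ t : g ⊗[k] g,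
        δ (brT t) = adTT ((TensorProduct.map (LinearMap.id : g →ₗ[k] g) δ) t)
          - adTT ((TensorProduct.map (LinearMap.id : g →ₗ[k] g) δ) (tauT t)) := by
      intro t
      induction t using TensorProduct.induction_on with
      | zero => simp
      | tmul a b => simp [hcocycle a b]
      | add u v hu hv =>
        simp only [map_add, hu, hv]
        abel
    -- compute δ (D x)
    have hL : δ (D x) = - adTT (rotT (rotT c)) - adTT (rotT (rotT c)) := by
      have h4 := hδbr (δ x)
      rw [hanti x, map_neg, map_neg, sub_neg_eq_add, hm, map_neg] at h4
      have : δ (D x) = δ (brT (δ x)) := rfl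
      rw [this, h4]
      abel
    -- compute the right-hand side
    have hR1 : (TensorProduct.map D LinearMap.id) (δ x) = psiT c := by
      have h5 : (TensorProduct.map D (LinearMap.id : g →ₗ[k] g))
          = (TensorProduct.map brT LinearMap.id) ∘ₗ
              (TensorProduct.map δ LinearMap.id) := by
        rw [← TensorProduct.map_comp]
        rfl
      rw [h5]
      simp [psiT, hc, LinearMap.comp_apply]
    have hR2 : (TensorProduct.map LinearMap.id D) (δ x) = - qT (rotT (rotT c)) := by
      have h6 : (TensorProduct.map (LinearMap.id : g →ₗ[k] g) D)
          = qT ∘ₗ (TensorProduct.map LinearMap.id δ) := by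
        rw [qT, ← TensorProduct.map_comp]
        rfl
      rw [h6, LinearMap.comp_apply, hm, map_neg]
    -- the key identity evaluated at c
    have hkey : psiT c - qT (rotT (rotT c)) + adTT (rotT (rotT c))
        + adTT (rotT (rotT c)) = 0 := by
      have h7 := congrFun (congrArg (fun f => f.toFun) (key_map (k := k) (g := g))) c
      have hLc : keyL (k := k) (g := g) c
          = psiT c - qT (rotT (rotT c)) + adTT (rotT (rotT c))
            + adTT (rotT (rotT c)) := by
        simp only [keyL, LinearMap.add_apply, LinearMap.sub_apply, LinearMap.comp_apply]
      have hRc : keyR (k := k) (g := g) c = 0 := by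
        have h8 : c + swapT c = 0 := by rw [hT]; abel
        simp only [keyR, LinearMap.sub_apply, LinearMap.comp_apply, LinearMap.add_apply,
          LinearMap.id_apply]
        rw [hS, h8]
        simp
      calc psiT c - qT (rotT (rotT c)) + adTT (rotT (rotT c)) + adTT (rotT (rotT c))
          = keyL (k := k) (g := g) c := hLc.symm
        _ = keyR (k := k) (g := g) c := by exact h7
        _ = 0 := hRc
    rw [hL, hR1, hR2]
    linear_combination (norm := abel) - hkey
end
end
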